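/- Let G be a simple graph on n vertices with at least one edge, let S be a proper subset of V(G), and let X and Y be disjoint nonempty vertex subsets with X ∪ Y = V(G) − S, |X| ≤ |Y|, and no edge of G joining a vertex of X to a vertex of Y. Then (μₙ(G) − μ₂(G))·|S| ≥ 2·μ₂(G)·|X|. -/

import Mathlib

namespace Paper

variable {V : Type*}

/-- The eigenvalues of the Laplacian matrix of `G`, listed in nondecreasing order
(with multiplicity), indexed by `Fin (Fintype.card V)`. -/
noncomputable def lapEig [Fintype V] (G : SimpleGraph V) : Fin (Fintype.card V) → ℝ :=
  letI := Classical.decEq V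
  letI : DecidableRel G.Adj := Classical.decRel _
  let f : Fin (Fintype.card V) → ℝ :=
    (SimpleGraph.posSemidef_lapMatrix ℝ G).isHermitian.eigenvalues ∘ (Fintype.equivFin V).symm
  f ∘ Tuple.sort f

/-- `mu G i` is the `i`-th smallest Laplacian eigenvalue of `G` (1-indexed),
so `mu G 2 = μ₂` and `mu G n = μₙ` when `G` has `n` vertices. -/
noncomputable def mu [Fintype V] (G : SimpleGraph V) (i : ℕ) : ℝ :=
  if h : i - 1 < Fintype.card V then lapEig G ⟨i - 1, h⟩ else 0

/-- The matching number of `G`: the maximum size of a matching. -/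
noncomputable def matchingNumber [Fintype V] (G : SimpleGraph V) : ℕ :=
  sSup {k | ∃ M : G.Subgraph, M.IsMatching ∧ M.edgeSet.ncard = k}

/-- Number of odd components (components with an odd number of vertices) of `G - S`. -/
noncomputable def oddComponentsCount [Fintype V] (G : SimpleGraph V) (S : Set V) : ℕ :=
  Nat.card {c : (SimpleGraph.induce Sᶜ G).ConnectedComponent // Odd c.supp.ncard}

/-- `G` is factor-critical: deleting any vertex leaves a graph with a perfect matching. -/
def IsFactorCritical (G : SimpleGraph V) : Prop :=
  ∀ v : V, ∃ M : (SimpleGraph.induce ({v}ᶜ : Set V) G).Subgraph, M.IsPerfectMatching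

/-- A graph is 2-edge-connected if it is connected and has no bridges. -/
def IsTwoEdgeConnected (G : SimpleGraph V) : Prop :=
  G.Connected ∧ ∀ e ∈ G.edgeSet, ¬ G.IsBridge e

/-- `B` is the vertex set of a balloon of `G`: a maximal 2-edge-connected subgraph of `G`
incident to exactly one cut-edge (bridge) of `G`. -/
def IsBalloon (G : SimpleGraph V) (B : Set V) : Prop :=
  IsTwoEdgeConnected (SimpleGraph.induce B G) ∧
  (∀ B' : Set V, B ⊆ B' → IsTwoEdgeConnected (SimpleGraph.induce B' G) → B' = B) ∧
  (∃! e : Sym2 V, G.IsBridge e ∧ ∃ v ∈ e, v ∈ B)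

/-- The number of balloons of `G`. -/
noncomputable def balloonCount [Fintype V] (G : SimpleGraph V) : ℕ :=
  Nat.card {B : Set V // IsBalloon G B}

/-- A dumbbell: a graph consisting of exactly two balloons (2-edge-connected pieces)
joined by a single edge. -/
def IsDumbbell (G : SimpleGraph V) : Prop :=
  ∃ B₁ B₂ : Set V, Disjoint B₁ B₂ ∧ B₁ ∪ B₂ = Set.univ ∧
    IsTwoEdgeConnected (SimpleGraph.induce B₁ G) ∧
    IsTwoEdgeConnected (SimpleGraph.induce B₂ G) ∧
    {e : Sym2 V | e ∈ G.edgeSet ∧ (∃ v ∈ e, v ∈ B₁) ∧ (∃ v ∈ e, v ∈ B₂)}.ncard = 1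

/-- The minimum degree of `G`. -/
noncomputable def minDeg [Fintype V] (G : SimpleGraph V) : ℕ :=
  sInf {k | ∃ v : V, (G.neighborSet v).ncard = k}

/-- Number of components `C` of `G - S` such that the number of edges of `G`
between `C` and `S` is odd. -/
noncomputable def qCount [Fintype V] (G : SimpleGraph V) (S : Set V) : ℕ :=
  Nat.card {c : (SimpleGraph.induce Sᶜ G).ConnectedComponent //
    Odd {p : V × V | p.1 ∈ Subtype.val '' c.supp ∧ p.2 ∈ S ∧ G.Adj p.1 p.2}.ncard}

end Paper

/-! Test the Rayleigh quotients of the Laplacian on the centred vectors of `𝟙_X - 𝟙_Y` and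
`𝟙_X + 𝟙_Y`. Since no edge joins `X` and `Y`, the two vectors change by the same absolute amount
along every edge, so both have Laplacian form `q = e(S, X ∪ Y)`. With `x, y, s` the sizes of
`X, Y, S` this gives `μ₂ (n(x+y) - (x-y)²) ≤ n q ≤ μₙ (x+y) s`, and
`n(x+y) - (x-y)² = (x+y)(s+2x) + 2x(y-x) ≥ (x+y)(s+2x)` because `x ≤ y`. -/

open Matrix WithLp

lemma OrthonormalBasis.dotProduct_eq_sum_repr {ι n : Type*} [Fintype ι] [Fintype n]
    (b : OrthonormalBasis ι ℝ (EuclideanSpace ℝ n)) (f g : n → ℝ) :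
    f ⬝ᵥ g = ∑ j, b.repr (toLp 2 f) j * b.repr (toLp 2 g) j := by
  have h := b.repr.inner_map_map (toLp 2 f) (toLp 2 g)
  simp only [EuclideanSpace.inner_eq_star_dotProduct, star_trivial] at h
  rw [dotProduct_comm, ← h, dotProduct]
  exact Finset.sum_congr rfl fun j _ => mul_comm _ _

namespace Matrix.IsHermitian

variable {n : Type*} [Fintype n] [DecidableEq n] {A : Matrix n n ℝ} (hA : A.IsHermitian)

lemma eigenvectorBasis_repr_mulVec (f : n → ℝ) (j : n) :
    hA.eigenvectorBasis.repr (toLp 2 (A *ᵥ f)) j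
      = hA.eigenvalues j * hA.eigenvectorBasis.repr (toLp 2 f) j := by
  simp only [OrthonormalBasis.repr_apply_apply, EuclideanSpace.inner_eq_star_dotProduct,
    star_trivial]
  rw [dotProduct_comm, dotProduct_mulVec, ← mulVec_transpose, (isHermitian_iff_isSymm.1 hA).eq,
    hA.mulVec_eigenvectorBasis, smul_dotProduct, smul_eq_mul, dotProduct_comm]

lemma dotProduct_self_eq_sum (f : n → ℝ) :
    f ⬝ᵥ f = ∑ j, hA.eigenvectorBasis.repr (toLp 2 f) j ^ 2 := by
  simp only [hA.eigenvectorBasis.dotProduct_eq_sum_repr, sq]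

lemma dotProduct_mulVec_eq_sum (f : n → ℝ) :
    f ⬝ᵥ A *ᵥ f = ∑ j, hA.eigenvalues j * hA.eigenvectorBasis.repr (toLp 2 f) j ^ 2 := by
  rw [hA.eigenvectorBasis.dotProduct_eq_sum_repr]
  exact Finset.sum_congr rfl fun j _ => by rw [eigenvectorBasis_repr_mulVec]; ring

lemma dotProduct_mulVec_le {c : ℝ} (hc : ∀ j, hA.eigenvalues j ≤ c) (f : n → ℝ) :
    f ⬝ᵥ A *ᵥ f ≤ c * (f ⬝ᵥ f) := by
  rw [hA.dotProduct_mulVec_eq_sum, hA.dotProduct_self_eq_sum, Finset.mul_sum]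
  exact Finset.sum_le_sum fun j _ => mul_le_mul_of_nonneg_right (hc j) (sq_nonneg _)

lemma le_dotProduct_mulVec {c : ℝ} {f : n → ℝ}
    (hc : ∀ j, c ≤ hA.eigenvalues j ∨ hA.eigenvectorBasis.repr (toLp 2 f) j = 0) :
    c * (f ⬝ᵥ f) ≤ f ⬝ᵥ A *ᵥ f := by
  rw [hA.dotProduct_mulVec_eq_sum, hA.dotProduct_self_eq_sum, Finset.mul_sum]
  refine Finset.sum_le_sum fun j _ => ?_
  rcases hc j with hj | hj
  · exact mul_le_mul_of_nonneg_right hj (sq_nonneg _)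
  · simp [hj]

/-- `hc` says that at most one eigenvalue lies below `c`. -/
lemma le_dotProduct_mulVec_of_orthogonal_ker {c : ℝ} (hnonneg : ∀ j, 0 ≤ hA.eigenvalues j)
    (hc : ∀ j j', j ≠ j' → c ≤ max (hA.eigenvalues j) (hA.eigenvalues j')) {u f : n → ℝ}
    (hu : A *ᵥ u = 0) (hu₀ : u ≠ 0) (hfu : f ⬝ᵥ u = 0) :
    c * (f ⬝ᵥ f) ≤ f ⬝ᵥ A *ᵥ f := by
  set r := fun v : n → ℝ => hA.eigenvectorBasis.repr (toLp 2 v)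
  refine hA.le_dotProduct_mulVec fun j => or_iff_not_imp_left.2 fun hj => ?_
  -- As `λ_j < c`, every other eigenvalue is positive, so `u` lies on the `j`-th eigenvector.
  have hu_supp : ∀ j', j' ≠ j → r u j' = 0 := by
    intro j' hj'
    have hpos : 0 < hA.eigenvalues j' := by
      have := hc j' j hj'
      have := hnonneg j
      grind
    have h := hA.eigenvectorBasis_repr_mulVec u j'
    rw [hu, toLp_zero, map_zero] at h
    exact (mul_eq_zero.1 h.symm).resolve_left hpos.ne'
  have hu_sum : ∀ g : n → ℝ, g ⬝ᵥ u = r g j * r u j := fun g => by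
    rw [hA.eigenvectorBasis.dotProduct_eq_sum_repr]
    exact Finset.sum_eq_single j (fun j' _ hj' => by simp [r, hu_supp j' hj']) (by simp)
  have hu_j : r u j ≠ 0 := by
    intro h
    apply hu₀
    rw [← dotProduct_self_eq_zero, hu_sum, h, mul_zero]
  rw [hu_sum] at hfu
  exact (mul_eq_zero.1 hfu).resolve_right hu_j

end Matrix.IsHermitian

namespace Paper

variable {V : Type*}

lemma indicator_one_sub_mul_indicator_one_sub_eq_zero {G : SimpleGraph V} {X Y : Set V}
    (hdisj : Disjoint X Y) (hNoEdge : ∀ x ∈ X, ∀ y ∈ Y, ¬ G.Adj x y) {i j : V} (hij : G.Adj i j) :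
    (X.indicator (1 : V → ℝ) i - X.indicator 1 j) * (Y.indicator 1 i - Y.indicator 1 j) = 0 := by
  classical
  have hXY := Set.disjoint_left.1 hdisj
  have hji := hij.symm
  simp only [Set.indicator_apply, Pi.one_apply]
  split_ifs <;> grind

variable [Fintype V]

lemma sum_indicator_one_eq_ncard (X : Set V) : ∑ v, X.indicator (1 : V → ℝ) v = X.ncard := by
  classical
  simp [Set.indicator_apply, Finset.sum_boole, Set.ncard_eq_toFinset_card']

lemma indicator_one_dotProduct (X Y : Set V) :
    X.indicator (1 : V → ℝ) ⬝ᵥ Y.indicator 1 = (X ∩ Y).ncard := by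
  rw [dotProduct, ← sum_indicator_one_eq_ncard, Set.inter_indicator_one]
  rfl

lemma sum_sub_mean_eq_zero (f : V → ℝ) : ∑ v, (f v - (∑ w, f w) / Fintype.card V) = 0 := by
  rcases isEmpty_or_nonempty V with _ | _
  · simp
  · rw [Finset.sum_sub_distrib, Finset.sum_const, Finset.card_univ, nsmul_eq_mul,
      mul_div_cancel₀ _ (by positivity), sub_self]

lemma card_mul_sum_sub_mean_sq (f : V → ℝ) :
    Fintype.card V * ∑ v, (f v - (∑ w, f w) / Fintype.card V) ^ 2
      = Fintype.card V * (f ⬝ᵥ f) - (∑ v, f v) ^ 2 := by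
  set m := (∑ w, f w) / Fintype.card V
  have h : ∑ v, (f v - m) ^ 2 = f ⬝ᵥ f - m * ∑ v, f v := by
    calc ∑ v, (f v - m) ^ 2 = ∑ v, (f v * f v - m * f v) - m * ∑ v, (f v - m) := by
          rw [Finset.mul_sum, ← Finset.sum_sub_distrib]
          exact Finset.sum_congr rfl fun v _ => by ring
      _ = _ := by
          rw [sum_sub_mean_eq_zero f, Finset.sum_sub_distrib, ← Finset.mul_sum]
          simp [dotProduct]
  rcases isEmpty_or_nonempty V with _ | _
  · simp
  · rw [h, mul_sub, ← mul_assoc, mul_div_cancel₀ _ (by positivity), sq]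

variable (G : SimpleGraph V)

lemma lapEig_monotone : Monotone (lapEig G) := Tuple.monotone_sort _

lemma mu_nonneg (i : ℕ) : 0 ≤ mu G i := by
  classical
  unfold mu lapEig
  split_ifs
  · exact (SimpleGraph.posSemidef_lapMatrix ℝ G).eigenvalues_nonneg _
  · rfl

variable [DecidableEq V] [DecidableRel G.Adj]

lemma exists_equiv_lapEig_eq_eigenvalues :
    ∃ e : V ≃ Fin (Fintype.card V),
      ∀ j, lapEig G (e j) = (G.isHermitian_lapMatrix ℝ).eigenvalues j := by
  -- `lapEig` is built from the classical instances; any others agree with them.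
  obtain rfl : ‹DecidableEq V› = Classical.decEq V := Subsingleton.elim _ _
  obtain rfl : ‹DecidableRel G.Adj› = Classical.decRel _ := Subsingleton.elim _ _
  let := Classical.decEq V
  let : DecidableRel G.Adj := Classical.decRel _
  refine ⟨(Fintype.equivFin V).trans
    (Tuple.sort ((G.isHermitian_lapMatrix ℝ).eigenvalues ∘ (Fintype.equivFin V).symm)).symm,
    fun j => ?_⟩
  simp [lapEig]

lemma eigenvalues_le_mu_card (j : V) :
    (G.isHermitian_lapMatrix ℝ).eigenvalues j ≤ mu G (Fintype.card V) := by
  obtain ⟨e, he⟩ := exists_equiv_lapEig_eq_eigenvalues G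
  have hlt : Fintype.card V - 1 < Fintype.card V := Nat.sub_lt (e j).pos one_pos
  rw [mu, dif_pos hlt, ← he]
  exact lapEig_monotone G (Fin.le_def.2 (Nat.le_sub_one_of_lt (e j).isLt))

lemma mu_two_le_max_eigenvalues {j j' : V} (hj : j ≠ j') :
    mu G 2 ≤ max ((G.isHermitian_lapMatrix ℝ).eigenvalues j)
      ((G.isHermitian_lapMatrix ℝ).eigenvalues j') := by
  obtain ⟨e, he⟩ := exists_equiv_lapEig_eq_eigenvalues G
  have hne : e j ≠ e j' := e.injective.ne hj
  have hcard : 1 < Fintype.card V := Fintype.one_lt_card_iff.2 ⟨j, j', hj⟩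
  rw [mu, dif_pos (by omega), ← he, ← he]
  rcases Nat.eq_zero_or_pos (e j) with h | h
  · exact le_max_of_le_right (lapEig_monotone G (Fin.le_def.2 (by simp; omega)))
  · exact le_max_of_le_left (lapEig_monotone G (Fin.le_def.2 (by simp; omega)))

lemma dotProduct_lapMatrix_mulVec_le (f : V → ℝ) :
    f ⬝ᵥ G.lapMatrix ℝ *ᵥ f ≤ mu G (Fintype.card V) * (f ⬝ᵥ f) :=
  (G.isHermitian_lapMatrix ℝ).dotProduct_mulVec_le (eigenvalues_le_mu_card G) f

lemma mu_two_mul_le_dotProduct_lapMatrix_mulVec {f : V → ℝ} (hf : ∑ v, f v = 0) :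
    mu G 2 * (f ⬝ᵥ f) ≤ f ⬝ᵥ G.lapMatrix ℝ *ᵥ f := by
  cases isEmpty_or_nonempty V
  · simp [dotProduct]
  exact (G.isHermitian_lapMatrix ℝ).le_dotProduct_mulVec_of_orthogonal_ker
    (G.posSemidef_lapMatrix ℝ).eigenvalues_nonneg (fun _ _ => mu_two_le_max_eigenvalues G)
    G.lapMatrix_mulVec_const_eq_zero one_ne_zero (by rwa [← Pi.one_def, dotProduct_one])

lemma dotProduct_lapMatrix_mulVec_congr {f g : V → ℝ}
    (h : ∀ i j, G.Adj i j → (f i - f j) ^ 2 = (g i - g j) ^ 2) :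
    f ⬝ᵥ G.lapMatrix ℝ *ᵥ f = g ⬝ᵥ G.lapMatrix ℝ *ᵥ g := by
  simp only [← toLinearMap₂'_apply', SimpleGraph.lapMatrix_toLinearMap₂']
  congr 2 with i
  congr 1 with j
  split_ifs with hij
  exacts [h i j hij, rfl]

lemma dotProduct_lapMatrix_mulVec_sub_eq_add {a b : V → ℝ}
    (h : ∀ i j, G.Adj i j → (a i - a j) * (b i - b j) = 0) :
    (a - b) ⬝ᵥ G.lapMatrix ℝ *ᵥ (a - b) = (a + b) ⬝ᵥ G.lapMatrix ℝ *ᵥ (a + b) :=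
  dotProduct_lapMatrix_mulVec_congr G fun i j hij => by
    simp only [Pi.sub_apply, Pi.add_apply]
    linear_combination (-4) * h i j hij

lemma exists_mean_zero_shift (f : V → ℝ) :
    ∃ g : V → ℝ, ∑ v, g v = 0 ∧
      Fintype.card V * (g ⬝ᵥ g) = Fintype.card V * (f ⬝ᵥ f) - (∑ v, f v) ^ 2 ∧
      g ⬝ᵥ G.lapMatrix ℝ *ᵥ g = f ⬝ᵥ G.lapMatrix ℝ *ᵥ f :=
  ⟨fun v => f v - (∑ w, f w) / Fintype.card V, sum_sub_mean_eq_zero f,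
    by rw [← card_mul_sum_sub_mean_sq]; simp [dotProduct, sq],
    dotProduct_lapMatrix_mulVec_congr G fun i j _ => by ring⟩

lemma mu_two_mul_le_card_mul (f : V → ℝ) :
    mu G 2 * (Fintype.card V * (f ⬝ᵥ f) - (∑ v, f v) ^ 2)
      ≤ Fintype.card V * (f ⬝ᵥ G.lapMatrix ℝ *ᵥ f) := by
  obtain ⟨g, hg, hgg, hgL⟩ := exists_mean_zero_shift G f
  rw [← hgg, ← hgL, mul_left_comm]
  exact mul_le_mul_of_nonneg_left (mu_two_mul_le_dotProduct_lapMatrix_mulVec G hg)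
    (Nat.cast_nonneg _)

lemma card_mul_le_mu_card_mul (f : V → ℝ) :
    Fintype.card V * (f ⬝ᵥ G.lapMatrix ℝ *ᵥ f)
      ≤ mu G (Fintype.card V) * (Fintype.card V * (f ⬝ᵥ f) - (∑ v, f v) ^ 2) := by
  obtain ⟨g, -, hgg, hgL⟩ := exists_mean_zero_shift G f
  rw [← hgg, ← hgL, mul_left_comm]
  exact mul_le_mul_of_nonneg_left (dotProduct_lapMatrix_mulVec_le G g) (Nat.cast_nonneg _)

end Paper

open Paper in
theorem lemma_part_two_general {n : ℕ} (G : SimpleGraph (Fin n))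
    (S X Y : Set (Fin n)) (hdisj : Disjoint X Y)
    (hX : X.Nonempty) (hUnion : X ∪ Y = Set.univ \ S)
    (hle : X.ncard ≤ Y.ncard) (hNoEdge : ∀ x ∈ X, ∀ y ∈ Y, ¬ G.Adj x y) :
    (mu G n - mu G 2) * (S.ncard : ℝ) ≥ 2 * mu G 2 * (X.ncard : ℝ) := by
  classical
  set a := X.indicator (1 : Fin n → ℝ)
  set b := Y.indicator (1 : Fin n → ℝ)
  have hq := dotProduct_lapMatrix_mulVec_sub_eq_add G
    fun _ _ => indicator_one_sub_mul_indicator_one_sub_eq_zero hdisj hNoEdge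
  have key := (mu_two_mul_le_card_mul G (a - b)).trans (hq ▸ card_mul_le_mu_card_mul G (a + b))
  simp only [Fintype.card_fin, Pi.add_apply, Pi.sub_apply, Finset.sum_add_distrib,
    Finset.sum_sub_distrib, sum_indicator_one_eq_ncard, add_dotProduct, dotProduct_add,
    sub_dotProduct, dotProduct_sub, indicator_one_dotProduct, Set.inter_self, hdisj.inter_eq,
    hdisj.symm.inter_eq, Set.ncard_empty, Nat.cast_zero, a, b] at key
  have hcard : (n : ℝ) = X.ncard + Y.ncard + S.ncard := by
    norm_cast
    rw [← Set.ncard_union_eq hdisj, hUnion,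
      Set.ncard_sdiff_add_ncard_of_subset (Set.subset_univ S), Set.ncard_univ, Nat.card_fin]
  rw [hcard] at key
  have hx : (0 : ℝ) < X.ncard := by exact_mod_cast (Set.ncard_pos (Set.toFinite X)).2 hX
  have hxy : (X.ncard : ℝ) ≤ Y.ncard := by exact_mod_cast hle
  refine le_of_mul_le_mul_left ?_ (add_pos_of_pos_of_nonneg hx (Nat.cast_nonneg Y.ncard))
  nlinarith [mul_nonneg (mul_nonneg (mu_nonneg G 2) hx.le) (sub_nonneg.2 hxy)]

open Paper in
/-- Key lemma, part 2: `(μₙ − μ₂)·|S| ≥ 2·μ₂·|X|`. -/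
theorem lemma_part_two {n : ℕ} (G : SimpleGraph (Fin n)) (hE : G.edgeSet.Nonempty)
    (S X Y : Set (Fin n)) (hS : S ⊂ Set.univ) (hdisj : Disjoint X Y)
    (hX : X.Nonempty) (hY : Y.Nonempty) (hUnion : X ∪ Y = Set.univ \ S)
    (hle : X.ncard ≤ Y.ncard) (hNoEdge : ∀ x ∈ X, ∀ y ∈ Y, ¬ G.Adj x y) :
    (mu G n - mu G 2) * (S.ncard : ℝ) ≥ 2 * mu G 2 * (X.ncard : ℝ) :=
  lemma_part_two_general G S X Y hdisj hX hUnion hle hNoEdge
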